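/- Let X be a Banach space, q ∈ [1, ∞), and let (d_n)_{n≥1} be a martingale difference sequence in L^q(Ω; X) with d_n = 0 for n > N. Set d*_0 = 0 and d*_n = max_{1≤m≤n} ‖d_m‖, and define v_n = d_n 1_{{‖d_n‖ > 2 d*_{n−1}}}. Then the martingale f^{(2)} with differences v_n − E(v_n | F_{n−1}) satisfies ‖ sup_{n≥1} ‖f^{(2)}_n‖ ‖_{L^q} ≤ (2 + 2q) ‖ d* ‖_{L^q}, where f^{(2)}_n = Σ_{k=1}^n (v_k − E(v_k | F_{k−1})) and d* = sup_{n≥1} ‖d_n‖. -/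

import Mathlib

/-!
A large jump at least doubles the running maximum: if `‖d_k‖ > 2 d*_{k-1}` then
`‖v_k‖ = ‖d_k‖ ≤ 2 (d*_k - d*_{k-1})`, so `∑_k ‖v_k‖ ≤ 2 d*` pointwise. With conditional Jensen,
`sup_n ‖f^{(2)}_n‖ ≤ 2 d* + ∑_k E(‖v_k‖ | F_{k-1})`, and the last sum is the predictable part `B`
of the increasing process `A_n = ∑_{k ≤ n} ‖v_k‖`; Garsia's inequality `‖B_N‖_q ≤ q ‖A_N‖_q`
then gives the constant `2 + 2q`.

Garsia's inequality: for `W = min(B, t)` the convexity bound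
`W_{n+1}^q - W_n^q ≤ q W_{n+1}^{q-1} (B_{n+1} - B_n)` and the pull-out property for the
`F_n`-measurable weight `W_{n+1}^{q-1}` turn the compensator increment into `A_{n+1} - A_n`;
summing and using `W_{n+1} ≤ W_N` gives `E W_N^q ≤ q E[W_N^{q-1} A_N] ≤ q ‖W_N‖_q^{q-1} ‖A_N‖_q`
by Hölder. The truncation keeps `‖W_N‖_q` finite so that it can be divided out, and Fatou lets
`t → ∞`.
-/

open MeasureTheory ProbabilityTheory
open scoped ENNReal NNReal Classical

noncomputable section

/-- The real-valued indicator of the event `{ω | f ω ∈ A}`. -/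
def evInd {Ω X : Type} (f : Ω → X) (A : Set X) : Ω → ℝ :=
  (f ⁻¹' A).indicator fun _ => (1 : ℝ)

/-- `(d n)_{n ≥ 1}` is a martingale difference sequence with respect to `ℱ` and `μ`. -/
def IsMDS {Ω X : Type} [NormedAddCommGroup X] [NormedSpace ℝ X] [CompleteSpace X]
    {m0 : MeasurableSpace Ω} (μ : Measure Ω) (ℱ : Filtration ℕ m0)
    (d : ℕ → Ω → X) : Prop :=
  (∀ n, 1 ≤ n → StronglyMeasurable[ℱ n] (d n)) ∧
  (∀ n, 1 ≤ n → Integrable (d n) μ) ∧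
  (∀ n, 1 ≤ n → μ[d n | ℱ (n - 1)] =ᵐ[μ] 0)

/-- `(d n)_{n ≥ 1}` is adapted to `ℱ`. -/
def Adapted1 {Ω X : Type} [TopologicalSpace X] {m0 : MeasurableSpace Ω}
    (ℱ : Filtration ℕ m0) (d : ℕ → Ω → X) : Prop :=
  ∀ n, 1 ≤ n → StronglyMeasurable[ℱ n] (d n)

/-- The sequences `(d n)_{n ≥ 1}` and `(e n)_{n ≥ 1}` are tangent. -/
def AreTangent {Ω X : Type} [MeasurableSpace X] {m0 : MeasurableSpace Ω}
    (μ : Measure Ω) (ℱ : Filtration ℕ m0) (d e : ℕ → Ω → X) : Prop :=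
  ∀ n, 1 ≤ n → ∀ A : Set X, MeasurableSet A →
    μ[evInd (d n) A | ℱ (n - 1)] =ᵐ[μ] μ[evInd (e n) A | ℱ (n - 1)]

/-- The sequence `(e n)_{n ≥ 1}` satisfies the (CI) condition. -/
def SatisfiesCI {Ω X : Type} [MeasurableSpace X] {m0 : MeasurableSpace Ω}
    (μ : Measure Ω) (ℱ : Filtration ℕ m0) (e : ℕ → Ω → X) : Prop :=
  ∃ 𝒢 : MeasurableSpace Ω,
    𝒢 ≤ (⨆ n, (ℱ n : MeasurableSpace Ω)) ∧
    (∀ n, 1 ≤ n → ∀ A : Set X, MeasurableSet A →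
      μ[evInd (e n) A | ℱ (n - 1)] =ᵐ[μ] μ[evInd (e n) A | 𝒢]) ∧
    (∀ n, 1 ≤ n → ∀ A : ℕ → Set X, (∀ i, MeasurableSet (A i)) →
      μ[fun ω => ∏ i ∈ Finset.Icc 1 n, evInd (e i) (A i) ω | 𝒢]
        =ᵐ[μ] fun ω => ∏ i ∈ Finset.Icc 1 n, (μ[evInd (e i) (A i) | 𝒢]) ω)

/-- `(e n)_{n ≥ 1}` is a decoupled tangent sequence of `(d n)_{n ≥ 1}`:
it is adapted, tangent to `(d n)`, and satisfies the (CI) condition. -/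
def IsDecoupledTangent {Ω X : Type} [NormedAddCommGroup X] [MeasurableSpace X]
    {m0 : MeasurableSpace Ω} (μ : Measure Ω) (ℱ : Filtration ℕ m0)
    (d e : ℕ → Ω → X) : Prop :=
  Adapted1 ℱ e ∧ AreTangent μ ℱ d e ∧ SatisfiesCI μ ℱ e

/-- The decoupling inequality for exponent `p` with constant `C`, over all complete
filtered probability spaces. -/
def DecIneq (X : Type) [NormedAddCommGroup X] [NormedSpace ℝ X] [CompleteSpace X]
    [MeasurableSpace X] [BorelSpace X] (p C : ℝ) : Prop :=
  ∀ (Ω : Type) (m0 : MeasurableSpace Ω) (μ : Measure Ω),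
    IsProbabilityMeasure μ → μ.IsComplete →
    ∀ (ℱ : Filtration ℕ m0) (d e : ℕ → Ω → X),
      IsMDS μ ℱ d → (∀ n, 1 ≤ n → MemLp (d n) (ENNReal.ofReal p) μ) →
      IsDecoupledTangent μ ℱ d e →
      ∀ N, 1 ≤ N →
        (∫ ω, ‖∑ n ∈ Finset.Icc 1 N, d n ω‖ ^ p ∂μ) ^ (1 / p)
          ≤ C * (∫ ω, ‖∑ n ∈ Finset.Icc 1 N, e n ω‖ ^ p ∂μ) ^ (1 / p)

/-- `X` has the decoupling property for tangent martingale difference sequences. -/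
def DecouplingProperty (X : Type) [NormedAddCommGroup X] [NormedSpace ℝ X] [CompleteSpace X]
    [MeasurableSpace X] [BorelSpace X] : Prop :=
  ∀ p : ℝ, 1 ≤ p → ∃ C : ℝ, DecIneq X p C

/-- `X` is a UMD Banach space. -/
def HasUMD (X : Type) [NormedAddCommGroup X] [NormedSpace ℝ X] [CompleteSpace X] : Prop :=
  ∀ p : ℝ, 1 < p → ∃ β : ℝ, 1 ≤ β ∧
    ∀ (Ω : Type) (m0 : MeasurableSpace Ω) (μ : Measure Ω), IsProbabilityMeasure μ →
    ∀ (ℱ : Filtration ℕ m0) (d : ℕ → Ω → X),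
      IsMDS μ ℱ d → (∀ n, 1 ≤ n → MemLp (d n) (ENNReal.ofReal p) μ) →
      ∀ ε : ℕ → ℝ, (∀ n, ε n = 1 ∨ ε n = -1) →
      ∀ N, 1 ≤ N →
        (∫ ω, ‖∑ n ∈ Finset.Icc 1 N, ε n • d n ω‖ ^ p ∂μ) ^ (1 / p)
          ≤ β * (∫ ω, ‖∑ n ∈ Finset.Icc 1 N, d n ω‖ ^ p ∂μ) ^ (1 / p)

lemma Real.rpow_sub_rpow_le_mul_sub {q x y : ℝ} (hq : 1 ≤ q) (hy : 0 ≤ y) (hyx : y ≤ x) :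
    x ^ q - y ^ q ≤ q * x ^ (q - 1) * (x - y) := by
  rcases (hy.trans hyx).eq_or_lt with rfl | hx
  · simp [le_antisymm hyx hy]
  have hbern := one_add_mul_self_le_rpow_one_add (s := y / x - 1)
    (by linarith [div_nonneg hy hx.le]) hq
  rw [add_sub_cancel, Real.div_rpow hy hx.le, le_div_iff₀ (by positivity)] at hbern
  have hexpand : (1 + q * (y / x - 1)) * x ^ q = x ^ q - q * (x ^ q / x) * (x - y) := by
    field_simp
    ring
  rw [Real.rpow_sub_one hx.ne']
  linarith

lemma min_rpow_sub_min_rpow_le {q x y t : ℝ} (hq : 1 ≤ q) (hy : 0 ≤ y) (ht : 0 ≤ t)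
    (hyx : y ≤ x) : min x t ^ q - min y t ^ q ≤ q * min x t ^ (q - 1) * (x - y) := by
  have hmin : min x t - min y t ≤ x - y := by
    simp only [min_def]
    split_ifs <;> linarith
  calc min x t ^ q - min y t ^ q ≤ q * min x t ^ (q - 1) * (min x t - min y t) :=
        Real.rpow_sub_rpow_le_mul_sub hq (le_min hy ht) (min_le_min_right t hyx)
    _ ≤ q * min x t ^ (q - 1) * (x - y) := by
        gcongr
        exact mul_nonneg (by linarith) (Real.rpow_nonneg (le_min (hy.trans hyx) ht) _)

lemma ENNReal.le_of_rpow_le_mul_rpow_sub_one {x c : ℝ≥0∞} {q : ℝ} (hx : x ≠ ∞)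
    (h : x ^ q ≤ c * x ^ (q - 1)) : x ≤ c := by
  rcases eq_or_ne x 0 with rfl | hx₀
  · exact zero_le
  have hsplit : x ^ q = x * x ^ (q - 1) := by
    have := ENNReal.rpow_add 1 (q - 1) hx₀ hx
    rwa [add_sub_cancel, ENNReal.rpow_one] at this
  rw [hsplit] at h
  exact (ENNReal.mul_le_mul_iff_left (ENNReal.rpow_pos (pos_iff_ne_zero.2 hx₀) hx).ne'
    (ENNReal.rpow_ne_top_of_ne_zero hx₀ hx)).1 h

lemma ENNReal.lintegral_mul_rpow_sub_one_le {Ω : Type*} {m0 : MeasurableSpace Ω} {μ : Measure Ω}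
    {q : ℝ} (hq : 1 ≤ q) {f g : Ω → ℝ≥0∞} (hf : AEMeasurable f μ) (hg : AEMeasurable g μ) :
    ∫⁻ ω, f ω * g ω ^ (q - 1) ∂μ
      ≤ (∫⁻ ω, f ω ^ q ∂μ) ^ (1 / q) * ((∫⁻ ω, g ω ^ q ∂μ) ^ (1 / q)) ^ (q - 1) := by
  rcases hq.eq_or_lt with rfl | hq
  · simp
  refine (ENNReal.lintegral_mul_rpow_le_lintegral_rpow_mul_lintegral_rpow
    (Real.HolderConjugate.conjExponent hq) hf hg).trans_eq ?_
  rw [← ENNReal.rpow_mul, Real.conjExponent]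
  congr 2
  field_simp

lemma Finset.measurable_sup {ι δ α : Type*} [MeasurableSpace δ] [MeasurableSpace α]
    [SemilatticeSup α] [OrderBot α] [MeasurableSup₂ α] {s : Finset ι} {f : ι → δ → α}
    (hf : ∀ i ∈ s, Measurable (f i)) : Measurable (s.sup f) :=
  Finset.sup_induction measurable_const (fun _ hg _ hh => hg.sup hh) hf

lemma Finset.sum_Icc_le_sum_Icc_of_eq_zero {g : ℕ → ℝ} {N : ℕ} (hg : ∀ k, 0 ≤ g k)
    (hgN : ∀ k, N < k → g k = 0) (a n : ℕ) :
    ∑ k ∈ Finset.Icc a n, g k ≤ ∑ k ∈ Finset.Icc a N, g k := by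
  rcases le_total n N with h | h
  · exact Finset.sum_le_sum_of_subset_of_nonneg (Finset.Icc_subset_Icc_right h)
      fun k _ _ => hg k
  · refine (Finset.sum_subset (Finset.Icc_subset_Icc_right h) fun k hk hk' => hgN k ?_).ge
    simp only [Finset.mem_Icc, not_and, not_le] at hk hk'
    exact hk' hk.1

lemma integral_mul_condExp_of_bound {Ω : Type*} {m m0 : MeasurableSpace Ω} {μ : Measure Ω}
    [IsFiniteMeasure μ] (hm : m ≤ m0) {f g : Ω → ℝ} (hg : StronglyMeasurable[m] g) {C : ℝ}
    (hg_bdd : ∀ᵐ ω ∂μ, ‖g ω‖ ≤ C) (hf : Integrable f μ) :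
    ∫ ω, g ω * (μ[f | m]) ω ∂μ = ∫ ω, g ω * f ω ∂μ :=
  calc ∫ ω, g ω * (μ[f | m]) ω ∂μ = ∫ ω, (μ[g * f | m]) ω ∂μ :=
        integral_congr_ae (condExp_stronglyMeasurable_mul_of_bound hm hg hf C hg_bdd).symm
    _ = ∫ ω, g ω * f ω ∂μ := integral_condExp hm

namespace MeasureTheory

variable {Ω : Type*} {m0 : MeasurableSpace Ω} {μ : Measure Ω} {ℱ : Filtration ℕ m0}
  {A : ℕ → Ω → ℝ} {q t : ℝ}

lemma ae_monotone_predictablePart (hA : ∀ ω, Monotone (A · ω)) :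
    ∀ᵐ ω ∂μ, Monotone (predictablePart A ℱ μ · ω) := by
  have hinc : ∀ᵐ ω ∂μ, ∀ n, 0 ≤ (μ[A (n + 1) - A n | ℱ n]) ω := ae_all_iff.2 fun n =>
    condExp_nonneg (.of_forall fun ω => sub_nonneg.2 (hA ω n.le_succ))
  filter_upwards [hinc] with ω hω
  refine monotone_nat_of_le_succ fun n => ?_
  simpa [predictablePart_add_one] using hω n

lemma ae_min_predictablePart_mem_Icc (hA : ∀ ω, Monotone (A · ω)) (ht : 0 ≤ t) :
    ∀ᵐ ω ∂μ, ∀ n, min (predictablePart A ℱ μ n ω) t ∈ Set.Icc 0 t := by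
  filter_upwards [ae_monotone_predictablePart (ℱ := ℱ) hA] with ω hω n
  exact ⟨le_min (by simpa using hω (Nat.zero_le n)) ht, min_le_right _ _⟩

lemma measurable_min_predictablePart (t : ℝ) (n : ℕ) :
    Measurable fun ω => min (predictablePart A ℱ μ n ω) t :=
  ((stronglyAdapted_predictablePart' n).mono (ℱ.le n)).measurable.min measurable_const

lemma integrable_min_predictablePart_rpow_mul (hA : ∀ ω, Monotone (A · ω)) (ht : 0 ≤ t)
    {r : ℝ} (hr : 0 ≤ r) (n : ℕ) {f : Ω → ℝ} (hf : Integrable f μ) :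
    Integrable (fun ω => min (predictablePart A ℱ μ n ω) t ^ r * f ω) μ := by
  refine hf.bdd_mul (c := t ^ r)
    ((measurable_min_predictablePart t n).pow_const r).aestronglyMeasurable ?_
  filter_upwards [ae_min_predictablePart_mem_Icc (μ := μ) (ℱ := ℱ) hA ht] with ω hω
  rw [Real.norm_of_nonneg (Real.rpow_nonneg (hω n).1 r)]
  exact Real.rpow_le_rpow (hω n).1 (hω n).2 hr

variable [IsFiniteMeasure μ]

lemma integral_min_predictablePart_rpow_succ_sub_le (hq : 1 ≤ q) (ht : 0 ≤ t)
    (hA_int : ∀ n, Integrable (A n) μ) (hA : ∀ ω, Monotone (A · ω)) (n : ℕ) :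
    ∫ ω, min (predictablePart A ℱ μ (n + 1) ω) t ^ q ∂μ
        - ∫ ω, min (predictablePart A ℱ μ n ω) t ^ q ∂μ
      ≤ q * ∫ ω, min (predictablePart A ℱ μ (n + 1) ω) t ^ (q - 1)
          * (A (n + 1) ω - A n ω) ∂μ := by
  set B := predictablePart A ℱ μ
  have hint : ∀ k, Integrable (fun ω => min (B k ω) t ^ q) μ := fun k => by
    simpa using integrable_min_predictablePart_rpow_mul hA ht (by linarith) k
      (integrable_const (1 : ℝ))
  have hW : StronglyMeasurable[ℱ n] fun ω => min (B (n + 1) ω) t ^ (q - 1) :=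
    ((stronglyAdapted_predictablePart n).measurable.min measurable_const).pow_const _
      |>.stronglyMeasurable
  have hbdd : ∀ᵐ ω ∂μ, ‖min (B (n + 1) ω) t ^ (q - 1)‖ ≤ t ^ (q - 1) := by
    filter_upwards [ae_min_predictablePart_mem_Icc (μ := μ) (ℱ := ℱ) hA ht] with ω hω
    rw [Real.norm_of_nonneg (Real.rpow_nonneg (hω _).1 _)]
    exact Real.rpow_le_rpow (hω _).1 (hω _).2 (by linarith)
  have hpull : ∫ ω, min (B (n + 1) ω) t ^ (q - 1) * (μ[A (n + 1) - A n | ℱ n]) ω ∂μ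
      = ∫ ω, min (B (n + 1) ω) t ^ (q - 1) * (A (n + 1) ω - A n ω) ∂μ :=
    integral_mul_condExp_of_bound (ℱ.le n) hW hbdd ((hA_int _).sub (hA_int _))
  rw [← integral_sub (hint _) (hint _), ← hpull, ← integral_const_mul]
  refine integral_mono_ae ((hint _).sub (hint _))
    ((integrable_min_predictablePart_rpow_mul hA ht (by linarith) _
      integrable_condExp).const_mul q) ?_
  filter_upwards [ae_monotone_predictablePart (μ := μ) (ℱ := ℱ) hA] with ω hω
  have hstep : B (n + 1) ω = B n ω + (μ[A (n + 1) - A n | ℱ n]) ω := by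
    simp [B, predictablePart_add_one]
  have hconvex := min_rpow_sub_min_rpow_le (x := B (n + 1) ω) (y := B n ω) hq
    (by simpa [B] using hω (Nat.zero_le n)) ht (hω n.le_succ)
  rwa [hstep, add_sub_cancel_left, ← hstep, mul_assoc] at hconvex

lemma integral_min_predictablePart_rpow_le (hq : 1 ≤ q) (ht : 0 ≤ t)
    (hA_int : ∀ n, Integrable (A n) μ) (hA : ∀ ω, Monotone (A · ω)) (hA0 : A 0 = 0)
    {n N : ℕ} (hnN : n ≤ N) :
    ∫ ω, min (predictablePart A ℱ μ n ω) t ^ q ∂μ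
      ≤ q * ∫ ω, min (predictablePart A ℱ μ N ω) t ^ (q - 1) * A n ω ∂μ := by
  set B := predictablePart A ℱ μ
  induction n with
  | zero => simp [B, hA0, ht, Real.zero_rpow (by linarith : q ≠ 0)]
  | succ n ih =>
    have hint : ∀ k f, Integrable f μ →
        Integrable (fun ω => min (B k ω) t ^ (q - 1) * f ω) μ :=
      fun k f hf => integrable_min_predictablePart_rpow_mul hA ht (by linarith) k hf
    have hΔA : Integrable (fun ω => A (n + 1) ω - A n ω) μ := (hA_int _).sub (hA_int _)
    have hlater : ∫ ω, min (B (n + 1) ω) t ^ (q - 1) * (A (n + 1) ω - A n ω) ∂μ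
        ≤ ∫ ω, min (B N ω) t ^ (q - 1) * (A (n + 1) ω - A n ω) ∂μ := by
      refine integral_mono_ae (hint _ _ hΔA) (hint _ _ hΔA) ?_
      filter_upwards [ae_monotone_predictablePart (μ := μ) (ℱ := ℱ) hA] with ω hω
      have hB₀ : 0 ≤ B (n + 1) ω := by simpa [B] using hω (Nat.zero_le (n + 1))
      gcongr
      · exact sub_nonneg.2 (hA ω n.le_succ)
      · exact hω hnN
    have hsplit : ∫ ω, min (B N ω) t ^ (q - 1) * A (n + 1) ω ∂μ
        = ∫ ω, min (B N ω) t ^ (q - 1) * A n ω ∂μ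
          + ∫ ω, min (B N ω) t ^ (q - 1) * (A (n + 1) ω - A n ω) ∂μ := by
      rw [← integral_add (hint _ _ (hA_int n)) (hint _ _ hΔA)]
      congr 1 with ω
      ring
    nlinarith [ih (by omega),
      integral_min_predictablePart_rpow_succ_sub_le (ℱ := ℱ) hq ht hA_int hA n]

lemma eLpNorm'_min_predictablePart_le (hq : 1 ≤ q) (ht : 0 ≤ t)
    (hA_int : ∀ n, Integrable (A n) μ) (hA : ∀ ω, Monotone (A · ω)) (hA0 : A 0 = 0) (N : ℕ) :
    eLpNorm' (fun ω => min (predictablePart A ℱ μ N ω) t) q μ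
      ≤ ENNReal.ofReal q * eLpNorm' (A N) q μ := by
  set W := fun ω => min (predictablePart A ℱ μ N ω) t
  have hq₀ : 0 < q := by linarith
  have hW : ∀ᵐ ω ∂μ, 0 ≤ W ω := by
    filter_upwards [ae_min_predictablePart_mem_Icc (μ := μ) (ℱ := ℱ) hA ht] with ω hω
      using (hω N).1
  have hAN : ∀ ω, 0 ≤ A N ω := fun ω => by simpa [hA0] using hA ω (Nat.zero_le N)
  have hWq : Integrable (fun ω => W ω ^ q) μ := by
    simpa using integrable_min_predictablePart_rpow_mul (ℱ := ℱ) hA ht hq₀.le N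
      (integrable_const (1 : ℝ))
  have hpow : eLpNorm' W q μ ^ q = ENNReal.ofReal (∫ ω, W ω ^ q ∂μ) := by
    rw [eLpNorm'_eq_lintegral_enorm, ← ENNReal.rpow_mul, one_div_mul_cancel hq₀.ne',
      ENNReal.rpow_one, ofReal_integral_eq_lintegral_ofReal hWq
        (by filter_upwards [hW] with ω hω using Real.rpow_nonneg hω q)]
    refine lintegral_congr_ae ?_
    filter_upwards [hW] with ω hω
    rw [Real.enorm_of_nonneg hω, ENNReal.ofReal_rpow_of_nonneg hω hq₀.le]
  have hprod : ENNReal.ofReal (∫ ω, W ω ^ (q - 1) * A N ω ∂μ)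
      = ∫⁻ ω, ‖A N ω‖ₑ * ‖W ω‖ₑ ^ (q - 1) ∂μ := by
    rw [ofReal_integral_eq_lintegral_ofReal
      (integrable_min_predictablePart_rpow_mul hA ht (by linarith) N (hA_int N))
      (by filter_upwards [hW] with ω hω using mul_nonneg (Real.rpow_nonneg hω _) (hAN ω))]
    refine lintegral_congr_ae ?_
    filter_upwards [hW] with ω hω
    rw [Real.enorm_of_nonneg hω, Real.enorm_of_nonneg (hAN ω), mul_comm,
      ENNReal.ofReal_mul (hAN ω), ENNReal.ofReal_rpow_of_nonneg hω (by linarith)]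
  refine ENNReal.le_of_rpow_le_mul_rpow_sub_one (q := q) ?_ ?_
  · intro htop
    simp [htop, ENNReal.top_rpow_of_pos hq₀] at hpow
  calc eLpNorm' W q μ ^ q ≤ ENNReal.ofReal (q * ∫ ω, W ω ^ (q - 1) * A N ω ∂μ) := by
        rw [hpow]
        exact ENNReal.ofReal_le_ofReal
          (integral_min_predictablePart_rpow_le hq ht hA_int hA hA0 le_rfl)
    _ = ENNReal.ofReal q * ∫⁻ ω, ‖A N ω‖ₑ * ‖W ω‖ₑ ^ (q - 1) ∂μ := by
        rw [ENNReal.ofReal_mul hq₀.le, hprod]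
    _ ≤ ENNReal.ofReal q * (eLpNorm' (A N) q μ * eLpNorm' W q μ ^ (q - 1)) := by
        gcongr
        exact ENNReal.lintegral_mul_rpow_sub_one_le hq (hA_int N).aemeasurable.enorm
          (measurable_min_predictablePart t N).enorm.aemeasurable
    _ = ENNReal.ofReal q * eLpNorm' (A N) q μ * eLpNorm' W q μ ^ (q - 1) :=
        (mul_assoc ..).symm

theorem eLpNorm'_predictablePart_le (hq : 1 ≤ q) (hA_int : ∀ n, Integrable (A n) μ)
    (hA : ∀ ω, Monotone (A · ω)) (hA0 : A 0 = 0) (N : ℕ) :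
    eLpNorm' (predictablePart A ℱ μ N) q μ ≤ ENNReal.ofReal q * eLpNorm' (A N) q μ := by
  have hlim : ∀ ω, Filter.Tendsto (fun t : ℕ => min (predictablePart A ℱ μ N ω) t)
      Filter.atTop (nhds (predictablePart A ℱ μ N ω)) := fun ω =>
    tendsto_const_nhds.congr' <| (tendsto_natCast_atTop_atTop.eventually_ge_atTop _).mono
      fun t ht => (min_eq_left ht).symm
  exact (Lp.eLpNorm'_lim_le_liminf_eLpNorm' (by linarith)
    (fun t => (measurable_min_predictablePart (t : ℝ) N).aestronglyMeasurable)
    (.of_forall hlim)).trans (Filter.liminf_le_of_frequently_le' (.of_forall fun t =>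
      eLpNorm'_min_predictablePart_le hq t.cast_nonneg hA_int hA hA0 N))

end MeasureTheory

section RunningMaxNorm

variable {E : Type*} [SeminormedAddCommGroup E] (x : ℕ → E)

def runningMaxNorm (n : ℕ) : ℝ≥0 := (Finset.Icc 1 n).sup fun m => ‖x m‖₊

def largeJump (n : ℕ) : E := if 2 * (runningMaxNorm x (n - 1) : ℝ) < ‖x n‖ then x n else 0

lemma runningMaxNorm_mono : Monotone (runningMaxNorm x) := fun _ _ h =>
  Finset.sup_mono (Finset.Icc_subset_Icc_right h)

lemma norm_le_runningMaxNorm {n : ℕ} (hn : 1 ≤ n) : ‖x n‖ ≤ runningMaxNorm x n :=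
  NNReal.coe_le_coe.2 (Finset.le_sup (f := fun m => ‖x m‖₊) (Finset.mem_Icc.2 ⟨hn, le_rfl⟩))

lemma norm_largeJump_le (n : ℕ) : ‖largeJump x n‖ ≤ ‖x n‖ := by
  unfold largeJump
  split_ifs <;> simp

lemma sum_norm_largeJump_le (n : ℕ) :
    ∑ k ∈ Finset.Icc 1 n, ‖largeJump x k‖ ≤ 2 * runningMaxNorm x n := by
  induction n with
  | zero => simp
  | succ n ih =>
    have hmono : (runningMaxNorm x n : ℝ) ≤ runningMaxNorm x (n + 1) :=
      runningMaxNorm_mono x n.le_succ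
    have hjump :
        ‖largeJump x (n + 1)‖ ≤ 2 * (runningMaxNorm x (n + 1) - runningMaxNorm x n) := by
      unfold largeJump
      rw [Nat.add_sub_cancel]
      split_ifs with h
      · linarith [norm_le_runningMaxNorm x (Nat.le_add_left 1 n)]
      · simpa using hmono
    rw [Finset.sum_Icc_succ_top (by omega)]
    linarith

lemma iSup_enorm_eq_runningMaxNorm {N : ℕ} (hx : ∀ n, N < n → x n = 0) :
    ⨆ n, ⨆ (_ : 1 ≤ n), (‖x n‖₊ : ℝ≥0∞) = runningMaxNorm x N := by
  refine le_antisymm (iSup₂_le fun n hn => ?_) ?_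
  · rcases le_or_gt n N with hnN | hNn
    · exact ENNReal.coe_le_coe.2
        (Finset.le_sup (f := fun m => ‖x m‖₊) (Finset.mem_Icc.2 ⟨hn, hnN⟩))
    · simp [hx n hNn]
  · rw [runningMaxNorm, ENNReal.coe_finset_sup]
    exact Finset.sup_le fun m hm => le_iSup₂_of_le m (Finset.mem_Icc.1 hm).1 le_rfl

end RunningMaxNorm

namespace MeasureTheory

variable {Ω X : Type*} [NormedAddCommGroup X] [NormedSpace ℝ X]
  {m0 : MeasurableSpace Ω} {μ : Measure Ω} {ℱ : Filtration ℕ m0}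

lemma predictablePart_sum_Icc {f : ℕ → Ω → X} (n : ℕ) :
    predictablePart (fun n => ∑ k ∈ Finset.Icc 1 n, f k) ℱ μ n
      = ∑ k ∈ Finset.Icc 1 n, μ[f k | ℱ (k - 1)] := by
  induction n with
  | zero => simp
  | succ n ih =>
    rw [predictablePart_add_one, ih, Finset.sum_Icc_succ_top (by omega),
      Finset.sum_Icc_succ_top (by omega), add_sub_cancel_left, Nat.add_sub_cancel]

theorem eLpNorm'_iSup_sum_sub_condExp_le [CompleteSpace X] [IsFiniteMeasure μ] {q : ℝ}
    (hq : 1 ≤ q) {v : ℕ → Ω → X} {N : ℕ} {G : Ω → ℝ}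
    (hv_int : ∀ k, 1 ≤ k → Integrable (v k) μ) (hvN : ∀ k, N < k → v k = 0)
    (hG : AEStronglyMeasurable G μ) (hvG : ∀ ω, ∑ k ∈ Finset.Icc 1 N, ‖v k ω‖ ≤ G ω) :
    eLpNorm' (fun ω => ⨆ n, ‖∑ k ∈ Finset.Icc 1 n, (v k ω - (μ[v k | ℱ (k - 1)]) ω)‖ₑ) q μ
      ≤ (1 + ENNReal.ofReal q) * eLpNorm' G q μ := by
  set A : ℕ → Ω → ℝ := fun n => ∑ k ∈ Finset.Icc 1 n, fun ω => ‖v k ω‖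
  have hA_int : ∀ n, Integrable (A n) μ := fun n =>
    integrable_finsetSum' _ fun k hk => (hv_int k (Finset.mem_Icc.1 hk).1).norm
  have hA_mono : ∀ ω, Monotone (A · ω) := fun ω _ _ h => by
    simpa [A] using Finset.sum_le_sum_of_subset_of_nonneg (Finset.Icc_subset_Icc_right h)
      fun k _ _ => norm_nonneg (v k ω)
  have hAG : ∀ ω, ‖A N ω‖ ≤ ‖G ω‖ := fun ω => by
    simpa [A, Real.norm_of_nonneg (Finset.sum_nonneg fun k _ => norm_nonneg (v k ω))] using
      (hvG ω).trans (Real.le_norm_self _)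
  have hbound : ∀ᵐ ω ∂μ, ∀ n, ‖∑ k ∈ Finset.Icc 1 n, (v k ω - (μ[v k | ℱ (k - 1)]) ω)‖
      ≤ G ω + predictablePart A ℱ μ N ω := by
    filter_upwards [ae_all_iff.2 fun k => norm_condExp_le (μ := μ) (m := ℱ (k - 1)) (v k)]
      with ω hω n
    set g : ℕ → ℝ := fun k => ‖v k ω‖ + (μ[fun ω => ‖v k ω‖ | ℱ (k - 1)]) ω
    have hg : ∀ k, 0 ≤ g k := fun k => add_nonneg (norm_nonneg _) ((norm_nonneg _).trans (hω k))
    have hgN : ∀ k, N < k → g k = 0 := fun k hk => by simp [g, hvN k hk]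
    calc ‖∑ k ∈ Finset.Icc 1 n, (v k ω - (μ[v k | ℱ (k - 1)]) ω)‖
        ≤ ∑ k ∈ Finset.Icc 1 n, g k := (norm_sum_le _ _).trans <| Finset.sum_le_sum fun k _ =>
          (norm_sub_le _ _).trans (add_le_add_right (hω k) _)
      _ ≤ ∑ k ∈ Finset.Icc 1 N, g k := Finset.sum_Icc_le_sum_Icc_of_eq_zero hg hgN 1 n
      _ = ∑ k ∈ Finset.Icc 1 N, ‖v k ω‖ + predictablePart A ℱ μ N ω := by
        rw [Finset.sum_add_distrib, predictablePart_sum_Icc, Finset.sum_apply]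
      _ ≤ G ω + predictablePart A ℱ μ N ω := by grw [hvG ω]
  calc eLpNorm' (fun ω => ⨆ n, ‖∑ k ∈ Finset.Icc 1 n, (v k ω - (μ[v k | ℱ (k - 1)]) ω)‖ₑ) q μ
      ≤ eLpNorm' (G + predictablePart A ℱ μ N) q μ := by
        refine eLpNorm'_mono_enorm_ae (by linarith) ?_
        filter_upwards [hbound] with ω hω
        exact iSup_le fun n => enorm_le_iff_norm_le.2 ((hω n).trans (Real.le_norm_self _))
    _ ≤ eLpNorm' G q μ + eLpNorm' (predictablePart A ℱ μ N) q μ :=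
        eLpNorm'_add_le hG
          ((stronglyAdapted_predictablePart' N).mono (ℱ.le N)).aestronglyMeasurable hq
    _ ≤ eLpNorm' G q μ + ENNReal.ofReal q * eLpNorm' (A N) q μ := by
        gcongr
        exact eLpNorm'_predictablePart_le hq hA_int hA_mono (by simp [A]) N
    _ ≤ eLpNorm' G q μ + ENNReal.ofReal q * eLpNorm' G q μ := by
        gcongr
        exact eLpNorm'_mono_ae (by linarith) (.of_forall hAG)
    _ = (1 + ENNReal.ofReal q) * eLpNorm' G q μ := by ring

end MeasureTheory

lemma measurable_runningMaxNorm {Ω X : Type*} [NormedAddCommGroup X] [MeasurableSpace Ω]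
    {d : ℕ → Ω → X} {n : ℕ} (hd : ∀ k ∈ Finset.Icc 1 n, StronglyMeasurable (d k)) :
    Measurable fun ω => (runningMaxNorm (d · ω) n : ℝ) := by
  have := Finset.measurable_sup (s := Finset.Icc 1 n) (f := fun k ω => ‖d k ω‖₊)
    fun k hk => (hd k hk).nnnorm.measurable
  refine measurable_coe_nnreal_real.comp ?_
  convert this using 1
  funext ω
  exact (Finset.sup_apply (Finset.Icc 1 n) (fun k ω => ‖d k ω‖₊) ω).symm

lemma integrable_largeJump {Ω X : Type*} [NormedAddCommGroup X] {m0 : MeasurableSpace Ω}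
    {μ : Measure Ω} {d : ℕ → Ω → X} (hd : ∀ k, 1 ≤ k → StronglyMeasurable (d k)) {n : ℕ}
    (hn : 1 ≤ n) (hd_int : Integrable (d n) μ) :
    Integrable (fun ω => largeJump (d · ω) n) μ := by
  have hset : MeasurableSet {ω | 2 * (runningMaxNorm (d · ω) (n - 1) : ℝ) < ‖d n ω‖} :=
    measurableSet_lt ((measurable_runningMaxNorm fun k hk =>
      hd k (Finset.mem_Icc.1 hk).1).const_mul 2) (hd n hn).norm.measurable
  exact hd_int.norm.mono'
    (StronglyMeasurable.ite hset (hd n hn) stronglyMeasurable_const).aestronglyMeasurable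
    (.of_forall fun ω => norm_largeJump_le (d · ω) n)

theorem davis_large_jump_martingale_general (X : Type) [NormedAddCommGroup X] [NormedSpace ℝ X]
    [CompleteSpace X]
    (Ω : Type) (m0 : MeasurableSpace Ω) (μ : Measure Ω) [IsProbabilityMeasure μ]
    (ℱ : Filtration ℕ m0) (q : ℝ) (hq : 1 ≤ q)
    (d : ℕ → Ω → X) (N : ℕ) (hd : IsMDS μ ℱ d)
    (hdN : ∀ n, N < n → d n = 0)
    (v f2 : ℕ → Ω → X)
    (hv : ∀ n ω, v n ω =
      if 2 * ((((Finset.Icc 1 (n - 1)).sup fun m => ‖d m ω‖₊) : ℝ≥0) : ℝ) < ‖d n ω‖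
        then d n ω else 0)
    (hf2 : ∀ n ω, f2 n ω = ∑ k ∈ Finset.Icc 1 n, (v k ω - (μ[v k | ℱ (k - 1)]) ω)) :
    (∫⁻ ω, (⨆ n, (‖f2 n ω‖₊ : ℝ≥0∞)) ^ q ∂μ) ^ (1 / q)
      ≤ ENNReal.ofReal (2 + 2 * q) *
        (∫⁻ ω, (⨆ n, ⨆ (_ : 1 ≤ n), (‖d n ω‖₊ : ℝ≥0∞)) ^ q ∂μ) ^ (1 / q) := by
  obtain rfl : v = fun n ω => largeJump (d · ω) n := funext fun n => funext (hv n)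
  obtain rfl := funext fun n => funext (hf2 n)
  set D : Ω → ℝ := fun ω => runningMaxNorm (d · ω) N
  have hd_meas : ∀ k, 1 ≤ k → StronglyMeasurable (d k) := fun k hk => (hd.1 k hk).mono (ℱ.le k)
  have hD : Measurable D :=
    measurable_runningMaxNorm fun k hk => hd_meas k (Finset.mem_Icc.1 hk).1
  have hjumps := eLpNorm'_iSup_sum_sub_condExp_le (ℱ := ℱ) hq (G := (2 : ℝ) • D)
    (fun k hk => integrable_largeJump hd_meas hk (hd.2.1 k hk))
    (fun k hk => funext fun ω => by simp [largeJump, hdN k hk])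
    (hD.const_smul (2 : ℝ)).aestronglyMeasurable (fun ω => sum_norm_largeJump_le (d · ω) N)
  have hdstar : ∀ ω, (⨆ n, ⨆ (_ : 1 ≤ n), (‖d n ω‖₊ : ℝ≥0∞)) = ‖D ω‖ₑ := fun ω => by
    rw [iSup_enorm_eq_runningMaxNorm _ fun n hn => congrFun (hdN n hn) ω]
    simp [D]
  rw [eLpNorm'_const_smul _ (by linarith), Real.enorm_of_nonneg zero_le_two,
    ENNReal.ofReal_ofNat] at hjumps
  calc _ ≤ (1 + ENNReal.ofReal q) * (2 * eLpNorm' D q μ) := hjumps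
    _ = _ := by
      rw [eLpNorm'_eq_lintegral_enorm, ENNReal.ofReal_add zero_le_two (by positivity),
        ENNReal.ofReal_mul zero_le_two]
      simp only [hdstar, ENNReal.ofReal_ofNat]
      ring

/-- Davis decomposition, estimate for the large-jump part: if
`(d n)_{n≥1}` is a martingale difference sequence in `L^q(Ω; X)` (`q ∈ [1, ∞)`) with
`d n = 0` for `n > N`, `v n = d n · 1_{‖d n‖ > 2 d*_{n-1}}`, and
`f2 n = Σ_{k=1}^n (v k − E(v k | F_{k-1}))`, then
`‖sup_{n≥1} ‖f2 n‖‖_{L^q} ≤ (2 + 2q) ‖d*‖_{L^q}` where `d* = sup_{n≥1} ‖d n‖`. -/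
theorem davis_large_jump_martingale (X : Type) [NormedAddCommGroup X] [NormedSpace ℝ X]
    [CompleteSpace X] [MeasurableSpace X] [BorelSpace X]
    (Ω : Type) (m0 : MeasurableSpace Ω) (μ : Measure Ω) [IsProbabilityMeasure μ]
    (hμ : μ.IsComplete) (ℱ : Filtration ℕ m0) (q : ℝ) (hq : 1 ≤ q)
    (d : ℕ → Ω → X) (N : ℕ) (hd : IsMDS μ ℱ d)
    (hLq : ∀ n, 1 ≤ n → MemLp (d n) (ENNReal.ofReal q) μ)
    (hdN : ∀ n, N < n → d n = 0)
    (v f2 : ℕ → Ω → X)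
    (hv : ∀ n ω, v n ω =
      if 2 * ((((Finset.Icc 1 (n - 1)).sup fun m => ‖d m ω‖₊) : ℝ≥0) : ℝ) < ‖d n ω‖
        then d n ω else 0)
    (hf2 : ∀ n ω, f2 n ω = ∑ k ∈ Finset.Icc 1 n, (v k ω - (μ[v k | ℱ (k - 1)]) ω)) :
    (∫⁻ ω, (⨆ n, (‖f2 n ω‖₊ : ℝ≥0∞)) ^ q ∂μ) ^ (1 / q)
      ≤ ENNReal.ofReal (2 + 2 * q) *
        (∫⁻ ω, (⨆ n, ⨆ (_ : 1 ≤ n), (‖d n ω‖₊ : ℝ≥0∞)) ^ q ∂μ) ^ (1 / q) :=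
  davis_large_jump_martingale_general X Ω m0 μ ℱ q hq d N hd hdN v f2 hv hf2
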